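/- Assume there is c > 0 with p(x'|x,a,μ,μ̃) ≥ c for all x', x, a, μ, μ̃, and assume L_p^{loc} < (1/2)|𝒳|c. For each fixed (x,a), distribution μ and Q-table Q, let μ̃*^{φ,(x,a)}_{μ,Q} be the unique fixed point of the one-step map Φ (associated with (x,a), μ, Q). Then for all distributions μ, μ' and all Q-tables Q, Q': ‖μ̃*^{φ,(x,a)}_{μ,Q} − μ̃*^{φ,(x,a)}_{μ',Q'}‖₁ ≤ (L_p^{glob} ‖μ − μ'‖₁ + φ |𝒜| ‖Q − Q'‖∞) / (|𝒳|c − L_p^{loc}); in particular (μ,Q) ↦ μ̃*^{φ,(x,a)}_{μ,Q} is Lipschitz. -/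

import Mathlib

open Finset

/-- A probability distribution on a finite set, viewed as a nonnegative
function summing to one. -/
def IsDist {X : Type*} [Fintype X] (μ : X → ℝ) : Prop :=
  (∀ x, 0 ≤ μ x) ∧ ∑ x, μ x = 1

/-- The ℓ¹ distance `‖μ - μ'‖₁` between two functions on a finite set. -/
def l1Dist {X : Type*} [Fintype X] (μ μ' : X → ℝ) : ℝ := ∑ x, |μ x - μ' x|

/-- The softmin map with parameter `φ`. -/
noncomputable def softmin {A : Type*} [Fintype A] (φ : ℝ) (z : A → ℝ) (a : A) : ℝ :=
  Real.exp (-φ * z a) / ∑ a', Real.exp (-φ * z a')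

/-- Sup norm `‖Q‖∞ = max_{(x,a)} |Q(x,a)|` of a Q-table. -/
noncomputable def supNorm {X A : Type*} [Fintype X] [Fintype A] [Nonempty X] [Nonempty A]
    (Q : X → A → ℝ) : ℝ :=
  Finset.univ.sup' Finset.univ_nonempty (fun q : X × A => |Q q.1 q.2|)

/-- The one-step map `Φ` associated with `(x,a)`, `μ` and `Q`. -/
noncomputable def stepMap {X A : Type*} [Fintype X] [Fintype A] [DecidableEq X]
    (φ : ℝ) (p : X → A → (X → ℝ) → (X → ℝ) → X → ℝ)
    (x : X) (a : A) (μ : X → ℝ) (Q : X → A → ℝ) (μt : X → ℝ) (y : X) : ℝ :=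
  (∑ x' ∈ Finset.univ.erase x, μt x' * ∑ a', softmin φ (Q x') a' * p x' a' μ μt y)
    + μt x * p x a μ μt y

/-! ### Auxiliary lemmas on `softmin` -/

lemma sum_exp_pos {A : Type*} [Fintype A] [Nonempty A] (φ : ℝ) (z : A → ℝ) :
    0 < ∑ a, Real.exp (-φ * z a) :=
  Finset.sum_pos (fun _ _ => Real.exp_pos _) Finset.univ_nonempty

lemma softmin_nonneg' {A : Type*} [Fintype A] [Nonempty A] (φ : ℝ) (z : A → ℝ) (a : A) :
    0 ≤ softmin φ z a :=
  div_nonneg (Real.exp_pos _).le (sum_exp_pos φ z).le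

lemma softmin_sum' {A : Type*} [Fintype A] [Nonempty A] (φ : ℝ) (z : A → ℝ) :
    ∑ a, softmin φ z a = 1 := by
  unfold softmin
  rw [← Finset.sum_div, div_self (sum_exp_pos φ z).ne']

/-- The logistic function is `1/4`-Lipschitz. -/
lemma logistic_lipschitz (s t : ℝ) :
    |(1 + Real.exp s)⁻¹ - (1 + Real.exp t)⁻¹| ≤ |s - t| / 4 := by
  have hder : ∀ u : ℝ, HasDerivAt (fun v => (1 + Real.exp v)⁻¹)
      (-(Real.exp u) / (1 + Real.exp u) ^ 2) u := by
    intro u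
    have h1 : HasDerivAt (fun v => 1 + Real.exp v) (Real.exp u) u :=
      (Real.hasDerivAt_exp u).const_add 1
    exact h1.inv (by positivity)
  have hb : ∀ u : ℝ, ‖-(Real.exp u) / (1 + Real.exp u) ^ 2‖ ≤ 1 / 4 := by
    intro u
    rw [Real.norm_eq_abs, abs_div, abs_neg, abs_of_pos (Real.exp_pos u),
      abs_of_pos (by positivity : (0:ℝ) < (1 + Real.exp u) ^ 2)]
    rw [div_le_div_iff₀ (by positivity) (by norm_num)]
    nlinarith [sq_nonneg (1 - Real.exp u), Real.exp_pos u]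
  have := Convex.norm_image_sub_le_of_norm_hasDerivWithin_le
    (f := fun v => (1 + Real.exp v)⁻¹) (f' := fun u => -(Real.exp u) / (1 + Real.exp u) ^ 2)
    (s := Set.univ)
    (fun u _ => (hder u).hasDerivWithinAt) (fun u _ => hb u) convex_univ
    (Set.mem_univ t) (Set.mem_univ s)
  rw [Real.norm_eq_abs, Real.norm_eq_abs] at this
  linarith [this]

/-- Changing a single coordinate of `z` changes `softmin φ z` by at most `φ` times the change,
in `ℓ¹` norm. -/
lemma softmin_single {A : Type*} [Fintype A] [Nonempty A] [DecidableEq A]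
    {φ : ℝ} (hφ : 0 < φ) (z z' : A → ℝ) (b : A)
    (h : ∀ a, a ≠ b → z a = z' a) :
    ∑ a, |softmin φ z a - softmin φ z' a| ≤ φ * |z b - z' b| := by
  set u := Real.exp (-φ * z b) with hu
  set u' := Real.exp (-φ * z' b) with hu'
  set R := ∑ a ∈ Finset.univ.erase b, Real.exp (-φ * z a) with hRdef
  have hRnn : 0 ≤ R := Finset.sum_nonneg fun i _ => (Real.exp_pos _).le
  have hR' : ∑ a ∈ Finset.univ.erase b, Real.exp (-φ * z' a) = R :=
    Finset.sum_congr rfl fun a ha => by rw [h a (Finset.ne_of_mem_erase ha)]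
  have hS : ∑ a, Real.exp (-φ * z a) = R + u := by
    rw [hRdef, Finset.sum_erase_add _ _ (mem_univ b)]
  have hS' : ∑ a, Real.exp (-φ * z' a) = R + u' := by
    rw [← hR', Finset.sum_erase_add _ _ (mem_univ b)]
  have hSpos : 0 < R + u := hS ▸ sum_exp_pos φ z
  have hS'pos : 0 < R + u' := hS' ▸ sum_exp_pos φ z'
  have hsplit : ∑ a, |softmin φ z a - softmin φ z' a|
      = (∑ a ∈ Finset.univ.erase b, |softmin φ z a - softmin φ z' a|)
        + |softmin φ z b - softmin φ z' b| := by
    rw [Finset.sum_erase_add _ _ (mem_univ b)]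
  have hoff : ∑ a ∈ Finset.univ.erase b, |softmin φ z a - softmin φ z' a|
      = R * |(R + u)⁻¹ - (R + u')⁻¹| := by
    rw [Finset.sum_mul]
    refine Finset.sum_congr rfl fun a ha => ?_
    have hzz : z a = z' a := h a (Finset.ne_of_mem_erase ha)
    unfold softmin
    rw [hS, hS', ← hzz, div_eq_mul_inv, div_eq_mul_inv, ← mul_sub, abs_mul,
      abs_of_pos (Real.exp_pos _)]
  have hb_eq : softmin φ z b - softmin φ z' b = R * (u - u') / ((R + u) * (R + u')) := by
    unfold softmin
    rw [hS, hS', ← hu, ← hu']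
    field_simp
    ring
  have hinv : (R + u)⁻¹ - (R + u')⁻¹ = (u' - u) / ((R + u) * (R + u')) := by
    field_simp
    ring
  have e1 : |R * (u - u') / ((R + u) * (R + u'))| = R * |u - u'| / ((R + u) * (R + u')) := by
    rw [abs_div, abs_mul, abs_of_nonneg hRnn, abs_of_pos (mul_pos hSpos hS'pos)]
  have e2 : |(u' - u) / ((R + u) * (R + u'))| = |u - u'| / ((R + u) * (R + u')) := by
    rw [abs_div, abs_sub_comm, abs_of_pos (mul_pos hSpos hS'pos)]
  have htot : ∑ a, |softmin φ z a - softmin φ z' a|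
      = 2 * |softmin φ z b - softmin φ z' b| := by
    rw [hsplit, hoff, hb_eq, hinv, e1, e2]; ring
  rw [htot]
  rcases eq_or_lt_of_le hRnn with hR0 | hRpos
  · have hz : softmin φ z b - softmin φ z' b = 0 := by
      rw [hb_eq, ← hR0]; ring
    rw [hz]; simp; positivity
  · -- `R > 0` : logistic form of the `b`-th coordinate
    have hev : ∀ v : ℝ, Real.exp (-φ * v) * Real.exp (φ * v) = 1 := by
      intro v; rw [← Real.exp_add]; ring_nf; exact Real.exp_zero
    have hform : ∀ v : ℝ, Real.exp (-φ * v) / (R + Real.exp (-φ * v))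
        = (1 + Real.exp (Real.log R + φ * v))⁻¹ := by
      intro v
      have he : Real.exp (Real.log R + φ * v) = R * Real.exp (φ * v) := by
        rw [Real.exp_add, Real.exp_log hRpos]
      have hd1 : (0:ℝ) < R + Real.exp (-φ * v) := by positivity
      have hd2 : (0:ℝ) < 1 + R * Real.exp (φ * v) := by positivity
      rw [he, div_eq_iff hd1.ne', inv_mul_eq_div, eq_div_iff hd2.ne']
      nlinarith [hev v]
    have hsm : softmin φ z b = (1 + Real.exp (Real.log R + φ * z b))⁻¹ := by
      unfold softmin; rw [hS, ← hu, hform (z b)]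
    have hsm' : softmin φ z' b = (1 + Real.exp (Real.log R + φ * z' b))⁻¹ := by
      unfold softmin; rw [hS', ← hu', hform (z' b)]
    rw [hsm, hsm']
    have := logistic_lipschitz (Real.log R + φ * z b) (Real.log R + φ * z' b)
    have habs : |Real.log R + φ * z b - (Real.log R + φ * z' b)| = φ * |z b - z' b| := by
      rw [show Real.log R + φ * z b - (Real.log R + φ * z' b) = φ * (z b - z' b) by ring,
        abs_mul, abs_of_pos hφ]
    rw [habs] at this
    nlinarith [abs_nonneg (z b - z' b)]

/-- `softmin` is `φ |A|`-Lipschitz from `ℓ∞` to `ℓ¹`. -/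
lemma softmin_lipschitz' {A : Type*} [Fintype A] [Nonempty A] [DecidableEq A]
    {φ : ℝ} (hφ : 0 < φ) (z z' : A → ℝ) (δ : ℝ) (hδ : ∀ a, |z a - z' a| ≤ δ) :
    ∑ a, |softmin φ z a - softmin φ z' a| ≤ φ * (Fintype.card A : ℝ) * δ := by
  have hδ0 : 0 ≤ δ := le_trans (abs_nonneg _) (hδ (Classical.arbitrary A))
  set w : Finset A → A → ℝ := fun S a => if a ∈ S then z' a else z a with hw
  have key : ∀ S : Finset A, ∑ a, |softmin φ z a - softmin φ (w S) a| ≤ φ * S.card * δ := by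
    intro S
    induction S using Finset.induction_on with
    | empty =>
      have : w ∅ = z := by funext a; simp [hw]
      simp [this]
    | @insert b S hb IH =>
      have hagree : ∀ a, a ≠ b → w S a = w (insert b S) a := by
        intro a hab
        simp only [hw, Finset.mem_insert]
        by_cases h : a ∈ S <;> simp [h, hab]
      have hstep := softmin_single hφ (w S) (w (insert b S)) b hagree
      have hbval : |w S b - w (insert b S) b| ≤ δ := by
        simp only [hw, hb, if_neg hb, Finset.mem_insert, if_pos (Or.inl rfl)]
        exact hδ b
      calc ∑ a, |softmin φ z a - softmin φ (w (insert b S)) a|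
          ≤ ∑ a, (|softmin φ z a - softmin φ (w S) a|
              + |softmin φ (w S) a - softmin φ (w (insert b S)) a|) := by
            apply Finset.sum_le_sum; intro a _; exact abs_sub_le _ _ _
        _ = (∑ a, |softmin φ z a - softmin φ (w S) a|)
              + ∑ a, |softmin φ (w S) a - softmin φ (w (insert b S)) a| :=
            Finset.sum_add_distrib
        _ ≤ φ * S.card * δ + φ * |w S b - w (insert b S) b| := add_le_add IH hstep
        _ ≤ φ * S.card * δ + φ * δ :=
            add_le_add_right (mul_le_mul_of_nonneg_left hbval hφ.le) _
        _ ≤ φ * (insert b S).card * δ := by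
            rw [Finset.card_insert_of_notMem hb]
            push_cast
            nlinarith
  have huniv : w Finset.univ = z' := by funext a; simp [hw]
  have := key Finset.univ
  rw [huniv] at this
  simpa [Finset.card_univ] using this

/-! ### The transition kernel of the one-step map -/

/-- The transition kernel of the one-step map. -/
noncomputable def ker {X A : Type*} [Fintype A] [DecidableEq X]
    (φ : ℝ) (p : X → A → (X → ℝ) → (X → ℝ) → X → ℝ)
    (x : X) (a : A) (μ : X → ℝ) (Q : X → A → ℝ) (μt : X → ℝ) (x' y : X) : ℝ :=
  if x' = x then p x a μ μt y else ∑ a', softmin φ (Q x') a' * p x' a' μ μt y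

lemma stepMap_eq_ker {X A : Type*} [Fintype X] [Fintype A] [DecidableEq X]
    (φ : ℝ) (p : X → A → (X → ℝ) → (X → ℝ) → X → ℝ)
    (x : X) (a : A) (μ : X → ℝ) (Q : X → A → ℝ) (μt : X → ℝ) (y : X) :
    stepMap φ p x a μ Q μt y = ∑ x', μt x' * ker φ p x a μ Q μt x' y := by
  rw [← Finset.sum_erase_add _ _ (mem_univ x)]
  unfold stepMap ker
  congr 1
  · refine Finset.sum_congr rfl fun x' hx' => ?_
    rw [if_neg (Finset.ne_of_mem_erase hx')]
  · rw [if_pos rfl]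

section KerLemmas
variable {X A : Type*} [Fintype X] [Fintype A] [Nonempty A] [DecidableEq X]
  (φ : ℝ) (p : X → A → (X → ℝ) → (X → ℝ) → X → ℝ) (x : X) (a : A)

lemma ker_sum_one (μ : X → ℝ) (Q : X → A → ℝ) (μt : X → ℝ) (hμ : IsDist μ) (hμt : IsDist μt)
    (hp : ∀ x a μ μt, IsDist μ → IsDist μt → IsDist (p x a μ μt)) (x' : X) :
    ∑ y, ker φ p x a μ Q μt x' y = 1 := by
  unfold ker
  by_cases h : x' = x
  · simp only [if_pos h]; exact (hp x a μ μt hμ hμt).2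
  · simp only [if_neg h]
    rw [Finset.sum_comm]
    rw [Finset.sum_congr rfl fun a' _ => (by rw [← Finset.mul_sum, (hp x' a' μ μt hμ hμt).2, mul_one] :
      ∑ y, softmin φ (Q x') a' * p x' a' μ μt y = softmin φ (Q x') a')]
    exact softmin_sum' φ (Q x')

lemma ker_ge (μ : X → ℝ) (Q : X → A → ℝ) (μt : X → ℝ) (hμ : IsDist μ) (hμt : IsDist μt)
    (c : ℝ) (hlow : ∀ (x' x : X) (a : A) (μ μt : X → ℝ), IsDist μ → IsDist μt → c ≤ p x a μ μt x')
    (x' y : X) : c ≤ ker φ p x a μ Q μt x' y := by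
  unfold ker
  by_cases h : x' = x
  · simp only [if_pos h]; exact hlow y x a μ μt hμ hμt
  · simp only [if_neg h]
    calc c = ∑ a', softmin φ (Q x') a' * c := by
          rw [← Finset.sum_mul, softmin_sum' φ (Q x'), one_mul]
      _ ≤ ∑ a', softmin φ (Q x') a' * p x' a' μ μt y :=
          Finset.sum_le_sum fun a' _ => mul_le_mul_of_nonneg_left
            (hlow y x' a' μ μt hμ hμt) (softmin_nonneg' φ (Q x') a')

end KerLemmas

/-- Doeblin-type contraction estimate for a kernel bounded below by `c`. -/
lemma doeblin {X : Type*} [Fintype X] (k : X → X → ℝ) (c : ℝ)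
    (hk1 : ∀ x', ∑ y, k x' y = 1) (hkc : ∀ x' y, c ≤ k x' y)
    (d : X → ℝ) (hd : ∑ x', d x' = 0) :
    ∑ y, |∑ x', d x' * k x' y| ≤ (1 - (Fintype.card X : ℝ) * c) * ∑ x', |d x'| := by
  have key : ∀ y, |∑ x', d x' * k x' y| ≤ ∑ x', |d x'| * (k x' y - c) := by
    intro y
    have h0 : ∑ x', d x' * k x' y = ∑ x', d x' * (k x' y - c) := by
      simp only [mul_sub]
      rw [Finset.sum_sub_distrib, ← Finset.sum_mul, hd, zero_mul, sub_zero]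
    rw [h0]
    refine (Finset.abs_sum_le_sum_abs _ _).trans ?_
    refine Finset.sum_le_sum fun i _ => ?_
    rw [abs_mul, abs_of_nonneg (sub_nonneg.2 (hkc i y))]
  calc ∑ y, |∑ x', d x' * k x' y| ≤ ∑ y, ∑ x', |d x'| * (k x' y - c) :=
        Finset.sum_le_sum fun y _ => key y
    _ = ∑ x', |d x'| * (1 - (Fintype.card X : ℝ) * c) := by
        rw [Finset.sum_comm]
        refine Finset.sum_congr rfl fun x' _ => ?_
        rw [← Finset.mul_sum]
        congr 1
        rw [Finset.sum_sub_distrib, hk1 x']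
        simp [Finset.card_univ, mul_comm]
    _ = (1 - (Fintype.card X : ℝ) * c) * ∑ x', |d x'| := by
        rw [← Finset.sum_mul, mul_comm]

section RowLemmas
variable {X A : Type*} [Fintype X] [Fintype A] [Nonempty X] [Nonempty A] [DecidableEq X]
  (φ : ℝ) (p : X → A → (X → ℝ) → (X → ℝ) → X → ℝ) (x : X) (a : A)

omit [Nonempty X] in
lemma ker_loc_row (Lpl : ℝ)
    (hploc : ∀ x a μ μt μt', IsDist μ → IsDist μt → IsDist μt' →
      l1Dist (p x a μ μt) (p x a μ μt') ≤ Lpl * l1Dist μt μt')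
    (μ : X → ℝ) (Q : X → A → ℝ) (μt μt' : X → ℝ)
    (hμ : IsDist μ) (hμt : IsDist μt) (hμt' : IsDist μt') (x' : X) :
    ∑ y, |ker φ p x a μ Q μt x' y - ker φ p x a μ Q μt' x' y| ≤ Lpl * l1Dist μt μt' := by
  unfold ker
  by_cases h : x' = x
  · simp only [if_pos h]
    exact hploc x a μ μt μt' hμ hμt hμt'
  · simp only [if_neg h]
    calc ∑ y, |∑ a', softmin φ (Q x') a' * p x' a' μ μt y
            - ∑ a', softmin φ (Q x') a' * p x' a' μ μt' y|
        = ∑ y, |∑ a', softmin φ (Q x') a' * (p x' a' μ μt y - p x' a' μ μt' y)| := by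
          refine Finset.sum_congr rfl fun y _ => ?_
          rw [← Finset.sum_sub_distrib]
          congr 1; exact Finset.sum_congr rfl fun a' _ => by ring
      _ ≤ ∑ y, ∑ a', softmin φ (Q x') a' * |p x' a' μ μt y - p x' a' μ μt' y| := by
          refine Finset.sum_le_sum fun y _ => ?_
          refine (Finset.abs_sum_le_sum_abs _ _).trans (Finset.sum_le_sum fun a' _ => ?_)
          rw [abs_mul, abs_of_nonneg (softmin_nonneg' φ (Q x') a')]
      _ = ∑ a', softmin φ (Q x') a' * ∑ y, |p x' a' μ μt y - p x' a' μ μt' y| := by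
          rw [Finset.sum_comm]
          exact Finset.sum_congr rfl fun a' _ => by rw [Finset.mul_sum]
      _ ≤ ∑ a', softmin φ (Q x') a' * (Lpl * l1Dist μt μt') :=
          Finset.sum_le_sum fun a' _ => mul_le_mul_of_nonneg_left
            (hploc x' a' μ μt μt' hμ hμt hμt') (softmin_nonneg' φ (Q x') a')
      _ = Lpl * l1Dist μt μt' := by
          rw [← Finset.sum_mul, softmin_sum' φ (Q x'), one_mul]

lemma ker_glob_row (hφ : 0 < φ) [DecidableEq A] (Lpg : ℝ)
    (hp : ∀ x a μ μt, IsDist μ → IsDist μt → IsDist (p x a μ μt))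
    (hpglob : ∀ x a μ μ' μt, IsDist μ → IsDist μ' → IsDist μt →
      l1Dist (p x a μ μt) (p x a μ' μt) ≤ Lpg * l1Dist μ μ')
    (μ μ' : X → ℝ) (Q Q' : X → A → ℝ) (μt : X → ℝ)
    (hμ : IsDist μ) (hμ' : IsDist μ') (hμt : IsDist μt) (x' : X) :
    ∑ y, |ker φ p x a μ Q μt x' y - ker φ p x a μ' Q' μt x' y| ≤
      Lpg * l1Dist μ μ' + φ * (Fintype.card A : ℝ) * supNorm (fun x a => Q x a - Q' x a) := by
  have hsup0 : 0 ≤ supNorm (fun x a => Q x a - Q' x a) := by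
    refine le_trans (abs_nonneg (Q x a - Q' x a)) ?_
    exact Finset.le_sup' (fun q : X × A => |Q q.1 q.2 - Q' q.1 q.2|) (mem_univ (x, a))
  have hterm2 : 0 ≤ φ * (Fintype.card A : ℝ) * supNorm (fun x a => Q x a - Q' x a) := by
    positivity
  unfold ker
  by_cases h : x' = x
  · simp only [if_pos h]
    calc ∑ y, |p x a μ μt y - p x a μ' μt y| ≤ Lpg * l1Dist μ μ' :=
          hpglob x a μ μ' μt hμ hμ' hμt
      _ ≤ _ := le_add_of_nonneg_right hterm2
  · simp only [if_neg h]
    have hsoft : ∑ a', |softmin φ (Q x') a' - softmin φ (Q' x') a'| ≤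
        φ * (Fintype.card A : ℝ) * supNorm (fun x a => Q x a - Q' x a) := by
      refine softmin_lipschitz' hφ _ _ _ fun a' => ?_
      exact Finset.le_sup' (fun q : X × A => |Q q.1 q.2 - Q' q.1 q.2|) (mem_univ (x', a'))
    calc ∑ y, |∑ a', softmin φ (Q x') a' * p x' a' μ μt y
            - ∑ a', softmin φ (Q' x') a' * p x' a' μ' μt y|
        = ∑ y, |∑ a', (softmin φ (Q x') a' * (p x' a' μ μt y - p x' a' μ' μt y)
            + (softmin φ (Q x') a' - softmin φ (Q' x') a') * p x' a' μ' μt y)| := by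
          refine Finset.sum_congr rfl fun y _ => ?_
          rw [← Finset.sum_sub_distrib]
          congr 1; exact Finset.sum_congr rfl fun a' _ => by ring
      _ ≤ ∑ y, ∑ a', (softmin φ (Q x') a' * |p x' a' μ μt y - p x' a' μ' μt y|
            + |softmin φ (Q x') a' - softmin φ (Q' x') a'| * p x' a' μ' μt y) := by
          refine Finset.sum_le_sum fun y _ => ?_
          refine (Finset.abs_sum_le_sum_abs _ _).trans (Finset.sum_le_sum fun a' _ => ?_)
          refine (abs_add_le _ _).trans ?_
          rw [abs_mul, abs_mul, abs_of_nonneg (softmin_nonneg' φ (Q x') a'),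
            abs_of_nonneg ((hp x' a' μ' μt hμ' hμt).1 y)]
      _ = (∑ a', softmin φ (Q x') a' * ∑ y, |p x' a' μ μt y - p x' a' μ' μt y|)
            + ∑ a', |softmin φ (Q x') a' - softmin φ (Q' x') a'| * ∑ y, p x' a' μ' μt y := by
          rw [Finset.sum_comm]
          rw [Finset.sum_congr rfl fun a' (_ : a' ∈ univ) => Finset.sum_add_distrib]
          rw [Finset.sum_add_distrib]
          congr 1
          · exact Finset.sum_congr rfl fun a' _ => by rw [Finset.mul_sum]
          · exact Finset.sum_congr rfl fun a' _ => by rw [Finset.mul_sum]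
      _ ≤ (∑ a', softmin φ (Q x') a' * (Lpg * l1Dist μ μ'))
            + ∑ a', |softmin φ (Q x') a' - softmin φ (Q' x') a'| * 1 := by
          refine add_le_add (Finset.sum_le_sum fun a' _ => mul_le_mul_of_nonneg_left
            (hpglob x' a' μ μ' μt hμ hμ' hμt) (softmin_nonneg' φ (Q x') a'))
            (Finset.sum_le_sum fun a' _ => ?_)
          rw [(hp x' a' μ' μt hμ' hμt).2]
      _ ≤ Lpg * l1Dist μ μ' + φ * (Fintype.card A : ℝ) * supNorm (fun x a => Q x a - Q' x a) := by
          rw [← Finset.sum_mul, softmin_sum' φ (Q x'), one_mul]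
          refine add_le_add_right ?_ _
          simpa using hsoft

end RowLemmas

lemma weighted_row_bound {X : Type*} [Fintype X] (ν : X → ℝ) (hν : IsDist ν)
    (g : X → X → ℝ) (B : ℝ) (hrow : ∀ x', ∑ y, |g x' y| ≤ B) :
    ∑ y, |∑ x', ν x' * g x' y| ≤ B := by
  calc ∑ y, |∑ x', ν x' * g x' y| ≤ ∑ y, ∑ x', ν x' * |g x' y| :=
        Finset.sum_le_sum fun y _ => (Finset.abs_sum_le_sum_abs _ _).trans
          (Finset.sum_le_sum fun i _ => by rw [abs_mul, abs_of_nonneg (hν.1 i)])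
    _ = ∑ x', ν x' * ∑ y, |g x' y| := by
        rw [Finset.sum_comm]
        exact Finset.sum_congr rfl fun i _ => (Finset.mul_sum _ _ _).symm
    _ ≤ ∑ x', ν x' * B := Finset.sum_le_sum fun i _ =>
        mul_le_mul_of_nonneg_left (hrow i) (hν.1 i)
    _ = B := by rw [← Finset.sum_mul, hν.2, one_mul]

/-- the fixed point `μ̃*^{φ,(x,a)}_{μ,Q}` of the one-step map `Φ` is Lipschitz
in `(μ,Q)`:
`‖μ̃*_{μ,Q} − μ̃*_{μ',Q'}‖₁ ≤ (L_p^glob ‖μ − μ'‖₁ + φ|𝒜| ‖Q − Q'‖∞)/(|𝒳|c − L_p^loc)`. -/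
theorem stepMap_fixed_point_lipschitz
    {X A : Type*} [Fintype X] [Fintype A] [Nonempty X] [Nonempty A] [DecidableEq X]
    (φ : ℝ) (hφ : 0 < φ)
    (p : X → A → (X → ℝ) → (X → ℝ) → X → ℝ)
    (Lpg Lpl : ℝ) (hLpg : 0 ≤ Lpg) (hLpl : 0 ≤ Lpl)
    (hp : ∀ x a μ μt, IsDist μ → IsDist μt → IsDist (p x a μ μt))
    (hpglob : ∀ x a μ μ' μt, IsDist μ → IsDist μ' → IsDist μt →
      l1Dist (p x a μ μt) (p x a μ' μt) ≤ Lpg * l1Dist μ μ')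
    (hploc : ∀ x a μ μt μt', IsDist μ → IsDist μt → IsDist μt' →
      l1Dist (p x a μ μt) (p x a μ μt') ≤ Lpl * l1Dist μt μt')
    (c : ℝ) (hc : 0 < c)
    (hlow : ∀ (x' x : X) (a : A) (μ μt : X → ℝ), IsDist μ → IsDist μt →
      c ≤ p x a μ μt x')
    (hcontr : Lpl < (Fintype.card X : ℝ) * c / 2)
    (x : X) (a : A)
    (μ μ' : X → ℝ) (hμ : IsDist μ) (hμ' : IsDist μ')
    (Q Q' : X → A → ℝ)
    (ν ν' : X → ℝ) (hν : IsDist ν) (hν' : IsDist ν')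
    (hfix : stepMap φ p x a μ Q ν = ν)
    (hfix' : stepMap φ p x a μ' Q' ν' = ν') :
    l1Dist ν ν' ≤
      (Lpg * l1Dist μ μ' + φ * (Fintype.card A : ℝ) * supNorm (fun x a => Q x a - Q' x a)) /
        ((Fintype.card X : ℝ) * c - Lpl) := by
  classical
  set D := l1Dist ν ν' with hD
  set Em := Lpg * l1Dist μ μ' + φ * (Fintype.card A : ℝ) * supNorm (fun x a => Q x a - Q' x a)
    with hEm
  set k1 := ker φ p x a μ Q ν with hk1
  set k2 := ker φ p x a μ Q ν' with hk2
  set k3 := ker φ p x a μ' Q' ν' with hk3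
  have hdec : ∀ y, ν y - ν' y =
      (∑ x', (ν x' - ν' x') * k1 x' y) + ((∑ x', ν' x' * (k1 x' y - k2 x' y))
        + (∑ x', ν' x' * (k2 x' y - k3 x' y))) := by
    intro y
    have h1 : ν y = ∑ x', ν x' * k1 x' y := by
      conv_lhs => rw [← hfix]
      exact stepMap_eq_ker φ p x a μ Q ν y
    have h2 : ν' y = ∑ x', ν' x' * k3 x' y := by
      conv_lhs => rw [← hfix']
      exact stepMap_eq_ker φ p x a μ' Q' ν' y
    rw [h1, h2, ← Finset.sum_sub_distrib, ← Finset.sum_add_distrib, ← Finset.sum_add_distrib]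
    exact Finset.sum_congr rfl fun x' _ => by ring
  have hS1 : ∑ y, |∑ x', (ν x' - ν' x') * k1 x' y| ≤ (1 - (Fintype.card X : ℝ) * c) * D := by
    refine doeblin k1 c (fun x' => ker_sum_one φ p x a μ Q ν hμ hν hp x')
      (fun x' y => ker_ge φ p x a μ Q ν hμ hν c hlow x' y) _ ?_
    rw [Finset.sum_sub_distrib, hν.2, hν'.2, sub_self]
  have hS2 : ∑ y, |∑ x', ν' x' * (k1 x' y - k2 x' y)| ≤ Lpl * D := by
    refine weighted_row_bound ν' hν' _ _ fun x' => ?_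
    exact ker_loc_row φ p x a Lpl hploc μ Q ν ν' hμ hν hν' x'
  have hS3 : ∑ y, |∑ x', ν' x' * (k2 x' y - k3 x' y)| ≤ Em := by
    refine weighted_row_bound ν' hν' _ _ fun x' => ?_
    exact ker_glob_row φ p x a hφ Lpg hp hpglob μ μ' Q Q' ν' hμ hμ' hν' x'
  have hmain : D ≤ (1 - (Fintype.card X : ℝ) * c) * D + (Lpl * D + Em) := by
    calc D = ∑ y, |ν y - ν' y| := by rw [hD]; rfl
      _ ≤ ∑ y, (|∑ x', (ν x' - ν' x') * k1 x' y| + (|∑ x', ν' x' * (k1 x' y - k2 x' y)|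
            + |∑ x', ν' x' * (k2 x' y - k3 x' y)|)) := by
          refine Finset.sum_le_sum fun y _ => ?_
          rw [hdec y]
          exact (abs_add_le _ _).trans (add_le_add_right (abs_add_le _ _) _)
      _ = (∑ y, |∑ x', (ν x' - ν' x') * k1 x' y|)
            + ((∑ y, |∑ x', ν' x' * (k1 x' y - k2 x' y)|)
              + ∑ y, |∑ x', ν' x' * (k2 x' y - k3 x' y)|) := by
          rw [Finset.sum_add_distrib]
          congr 1
          rw [Finset.sum_add_distrib]
      _ ≤ (1 - (Fintype.card X : ℝ) * c) * D + (Lpl * D + Em) :=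
          add_le_add hS1 (add_le_add hS2 hS3)
  have hXpos : (0:ℝ) < (Fintype.card X : ℝ) * c := by
    have : (0:ℝ) < (Fintype.card X : ℝ) := by exact_mod_cast Fintype.card_pos
    positivity
  have hden : (0:ℝ) < (Fintype.card X : ℝ) * c - Lpl := by linarith
  rw [le_div_iff₀ hden]
  linarith
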